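/- Let (cₙ) be a sequence of complex numbers with cₙ → 0 as n → ∞. Then there exists a sequence of signs (xₙ) ∈ {-1,1}^ℕ such that the series ∑ xₙcₙ converges and ‖∑_{n=1}^∞ xₙcₙ‖ ≤ 5 · sup_n ‖cₙ‖. -/

import Mathlib

/-!
By the Bárány–Grinberg argument, a bounded sequence in a `d`-dimensional real normed space can be
signed so that every partial sum has norm at most `2d` times the bound: keep coefficients in
`[-1, 1]` that balance the first `n` vectors with at most `d` of them strictly inside; when a
vector is added, move along a linear relation among the floating coefficients until one of them
becomes a sign. Since `cₙ → 0`, the indices split into finite blocks on which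
`‖cₙ‖ ≤ M 5⁻ʲ`; signing each block separately and summing over blocks gives a convergent series,
and in `ℂ ≅ ℝ × ℝ` with the sup norm (`d = 2`) the bound `4M ∑ 5⁻ʲ = 5M`.
-/

open Complex Finset Filter Topology
open Module

theorem Module.exists_nontrivial_relation_supported_of_finrank_lt_card {R M ι : Type*} [Ring R]
    [StrongRankCondition R] [AddCommGroup M] [Module R M] [Module.Finite R M]
    (v : ι → M) {F : Finset ι} (h : finrank R M < #F) :
    ∃ g : ι → R, (∀ i ∉ F, g i = 0) ∧ ∑ i ∈ F, g i • v i = 0 ∧ ∃ i ∈ F, g i ≠ 0 := by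
  classical
  obtain ⟨g, hg, i, hi⟩ := Fintype.not_linearIndependent_iff.mp
    (mt LinearIndependent.fintype_card_le_finrank (by simpa using h.not_ge) :
      ¬LinearIndependent R fun i : F => v i)
  have hext : ∀ i : F, Subtype.val.extend g 0 i.1 = g i :=
    Subtype.val_injective.extend_apply g 0
  refine ⟨Subtype.val.extend g 0, fun j hj => ?_, ?_, i, i.2, by rwa [hext]⟩
  · exact Function.extend_apply' _ _ _ fun ⟨k, hk⟩ => hj (hk ▸ k.2)
  · rw [← Finset.sum_coe_sort F]
    simpa only [hext] using hg

/-- For `|a| < 1` and `b ≠ 0`, the time `t > 0` at which `a + t * b` reaches `±1`. -/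
noncomputable def exitTime (a b : ℝ) : ℝ := ((if 0 < b then 1 else -1) - a) / b

section exitTime

variable {a b t : ℝ}

theorem exitTime_pos (ha : |a| < 1) (hb : b ≠ 0) : 0 < exitTime a b := by
  obtain ⟨ha₁, ha₂⟩ := abs_lt.mp ha
  rcases hb.lt_or_gt with hb | hb
  · rw [exitTime, if_neg hb.not_gt]
    exact div_pos_of_neg_of_neg (by linarith) hb
  · rw [exitTime, if_pos hb]
    exact div_pos (by linarith) hb

theorem abs_add_mul_le_one (ha : |a| ≤ 1) (hb : b ≠ 0) (ht₀ : 0 ≤ t) (ht : t ≤ exitTime a b) :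
    |a + t * b| ≤ 1 := by
  obtain ⟨ha₁, ha₂⟩ := abs_le.mp ha
  rcases hb.lt_or_gt with hb | hb
  · have : -1 - a ≤ t * b := by
      simpa [exitTime, hb.not_gt, div_mul_cancel₀ _ hb.ne] using
        mul_le_mul_of_nonpos_right ht hb.le
    exact abs_le.mpr ⟨by linarith, by nlinarith⟩
  · have : t * b ≤ 1 - a := by
      simpa [exitTime, hb, div_mul_cancel₀ _ hb.ne'] using mul_le_mul_of_nonneg_right ht hb.le
    exact abs_le.mpr ⟨by nlinarith, by linarith⟩

theorem abs_add_exitTime_mul (hb : b ≠ 0) : |a + exitTime a b * b| = 1 := by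
  rw [exitTime, div_mul_cancel₀ _ hb]
  split_ifs <;> simp

end exitTime

section Floating

variable {ι E : Type*} [AddCommGroup E] [Module ℝ E] [Module.Finite ℝ E] (v : ι → E)

/-- The indices in `s` whose coefficient is not yet a sign. -/
noncomputable def floating (a : ι → ℝ) (s : Finset ι) : Finset ι := s.filter fun i => |a i| < 1

theorem abs_lt_one_of_mem_floating {a : ι → ℝ} {s : Finset ι} {i : ι} (hi : i ∈ floating a s) :
    |a i| < 1 :=
  (mem_filter.mp hi).2

/-- Moving along a linear relation among the floating vectors until a first coefficient reaches
`±1` fixes that coefficient without changing the weighted sum. -/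
theorem exists_floating_ssubset {a : ι → ℝ} {s : Finset ι} (ha : ∀ i, |a i| ≤ 1)
    (h : finrank ℝ E < #(floating a s)) :
    ∃ b : ι → ℝ, (∀ i, |b i| ≤ 1) ∧ ∑ i ∈ s, b i • v i = ∑ i ∈ s, a i • v i ∧
      (∀ i ∉ floating a s, b i = a i) ∧ floating b s ⊂ floating a s := by
  set F := floating a s
  obtain ⟨g, hgF, hgv, i₁, hi₁, hgi₁⟩ :=
    Module.exists_nontrivial_relation_supported_of_finrank_lt_card v h
  set F' := F.filter fun i => g i ≠ 0
  have hF' : F'.Nonempty := ⟨i₁, mem_filter.mpr ⟨hi₁, hgi₁⟩⟩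
  set t := F'.inf' hF' fun i => exitTime (a i) (g i)
  have ht₀ : 0 ≤ t := Finset.le_inf' hF' _ fun i hi =>
    (exitTime_pos (abs_lt_one_of_mem_floating (mem_filter.mp hi).1) (mem_filter.mp hi).2).le
  have hfixed : ∀ i ∉ F, a i + t * g i = a i := fun i hi => by simp [hgF i hi]
  refine ⟨fun i => a i + t * g i, fun i => ?_, ?_, hfixed, ?_⟩
  · by_cases hgi : g i = 0
    · simpa [hgi] using ha i
    have hi : i ∈ F' := mem_filter.mpr ⟨by_contra fun hi => hgi (hgF i hi), hgi⟩
    exact abs_add_mul_le_one (ha i) hgi ht₀ (Finset.inf'_le _ hi)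
  · have hgs : ∑ i ∈ s, g i • v i = 0 := by
      rw [← hgv]
      exact (Finset.sum_subset (filter_subset _ _) fun i _ hi => by simp [hgF i hi]).symm
    simp only [add_smul, mul_smul, sum_add_distrib, ← smul_sum, hgs, smul_zero, add_zero]
  · obtain ⟨i₀, hi₀, ht⟩ := Finset.exists_mem_eq_inf' hF' fun i => exitTime (a i) (g i)
    obtain ⟨hi₀F, hgi₀⟩ := mem_filter.mp hi₀
    have hsub : floating (fun i => a i + t * g i) s ⊆ F := fun i hi => by
      by_contra hiF
      obtain ⟨his, hlt⟩ := mem_filter.mp hi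
      exact hiF (mem_filter.mpr ⟨his, by simpa [hfixed i hiF] using hlt⟩)
    refine (ssubset_iff_of_subset hsub).mpr ⟨i₀, hi₀F, fun hi => ?_⟩
    have := abs_lt_one_of_mem_floating hi
    rw [show t = _ from ht, abs_add_exitTime_mul hgi₀] at this
    exact lt_irrefl _ this

theorem exists_card_floating_le {a : ι → ℝ} (s : Finset ι) (ha : ∀ i, |a i| ≤ 1) :
    ∃ b : ι → ℝ, (∀ i, |b i| ≤ 1) ∧ ∑ i ∈ s, b i • v i = ∑ i ∈ s, a i • v i ∧
      (∀ i ∉ floating a s, b i = a i) ∧ #(floating b s) ≤ finrank ℝ E := by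
  obtain ⟨n, hn⟩ : ∃ n, #(floating a s) = n := ⟨_, rfl⟩
  induction n using Nat.strong_induction_on generalizing a with
  | _ n ih =>
    by_cases h : #(floating a s) ≤ finrank ℝ E
    · exact ⟨a, ha, rfl, fun _ _ => rfl, h⟩
    obtain ⟨b, hb, hbs, hba, hss⟩ := exists_floating_ssubset v ha (not_le.mp h)
    obtain ⟨c, hc, hcs, hcb, hcard⟩ := ih _ (hn ▸ card_lt_card hss) hb rfl
    exact ⟨c, hc, hcs.trans hbs,
      fun i hi => (hcb i fun h' => hi (hss.subset h')).trans (hba i hi), hcard⟩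

end Floating

section Balancing

variable {E : Type*} [AddCommGroup E] [Module ℝ E] (v : ℕ → E)

structure IsBalancing (n : ℕ) (a : ℕ → ℝ) : Prop where
  abs_le_one : ∀ i, |a i| ≤ 1
  sum_eq_zero : ∑ i ∈ range n, a i • v i = 0
  eq_zero_of_le : ∀ i, n ≤ i → a i = 0
  card_floating_le : #(floating a (range n)) ≤ finrank ℝ E

theorem isBalancing_zero : IsBalancing v 0 0 where
  abs_le_one := by simp
  sum_eq_zero := by simp
  eq_zero_of_le := by simp
  card_floating_le := by simp [floating]

theorem IsBalancing.exists_succ [Module.Finite ℝ E] {n : ℕ} {a : ℕ → ℝ}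
    (h : IsBalancing v n a) :
    ∃ b, IsBalancing v (n + 1) b ∧ ∀ i, |a i| = 1 → b i = a i := by
  obtain ⟨b, hb, hbs, hba, hcard⟩ := exists_card_floating_le v (range (n + 1)) h.abs_le_one
  have hfixed : ∀ i, (n + 1 ≤ i ∨ |a i| = 1) → b i = a i := fun i hi =>
    hba i fun hmem => by
      obtain ⟨hi', hlt⟩ := mem_filter.mp hmem
      rcases hi with hi | hi
      · exact (mem_range.mp hi').not_ge hi
      · exact hlt.ne hi
  refine ⟨b, ⟨hb, ?_, fun i hi => ?_, hcard⟩, fun i hi => hfixed i (.inr hi)⟩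
  · rw [hbs, sum_range_succ, h.sum_eq_zero, h.eq_zero_of_le n le_rfl, zero_smul, add_zero]
  · rw [hfixed i (.inl hi), h.eq_zero_of_le i (by omega)]

noncomputable def balancingSeq [Module.Finite ℝ E] : (n : ℕ) → {a : ℕ → ℝ // IsBalancing v n a}
  | 0 => ⟨0, isBalancing_zero v⟩
  | n + 1 => ⟨_, ((balancingSeq n).2.exists_succ v).choose_spec.1⟩

theorem balancingSeq_apply_of_le [Module.Finite ℝ E] {n m : ℕ} (hnm : n ≤ m) {i : ℕ}
    (hi : |(balancingSeq v n).1 i| = 1) : (balancingSeq v m).1 i = (balancingSeq v n).1 i := by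
  induction m, hnm using Nat.le_induction with
  | base => rfl
  | succ m _ ih =>
    rw [← ih]
    exact ((balancingSeq v m).2.exists_succ v).choose_spec.2 i (ih ▸ hi)

open scoped Classical in
/-- Defaults to `1` if the `i`-th coefficient never becomes a sign. -/
noncomputable def balancingSign [Module.Finite ℝ E] (i : ℕ) : ℝ :=
  if h : ∃ n, |(balancingSeq v n).1 i| = 1 then (balancingSeq v (Nat.find h)).1 i else 1

theorem balancingSign_eq_or [Module.Finite ℝ E] (i : ℕ) :
    balancingSign v i = 1 ∨ balancingSign v i = -1 := by
  unfold balancingSign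
  split_ifs with h
  · exact (abs_eq zero_le_one).mp (Nat.find_spec h)
  · exact .inl rfl

theorem balancingSign_eq [Module.Finite ℝ E] {n i : ℕ} (hi : |(balancingSeq v n).1 i| = 1) :
    balancingSign v i = (balancingSeq v n).1 i := by
  classical
  have h : ∃ n, |(balancingSeq v n).1 i| = 1 := ⟨n, hi⟩
  rw [balancingSign, dif_pos h]
  exact (balancingSeq_apply_of_le v (Nat.find_min' h hi) (Nat.find_spec h)).symm

end Balancing

/-- Bárány–Grinberg: the `n`-th partial sum equals `∑ (εᵢ - aᵢ) • vᵢ` over the at most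
`finrank ℝ E` floating indices of the `n`-th balancing coefficients `a`. -/
theorem exists_signs_norm_sum_range_le {E : Type*} [NormedAddCommGroup E] [NormedSpace ℝ E]
    [FiniteDimensional ℝ E] (v : ℕ → E) {δ : ℝ} (hv : ∀ i, ‖v i‖ ≤ δ) :
    ∃ ε : ℕ → ℝ, (∀ i, ε i = 1 ∨ ε i = -1) ∧
      ∀ n, ‖∑ i ∈ range n, ε i • v i‖ ≤ 2 * finrank ℝ E * δ := by
  refine ⟨balancingSign v, balancingSign_eq_or v, fun n => ?_⟩
  set a := (balancingSeq v n).1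
  have ha := (balancingSeq v n).2
  have hsum : ∑ i ∈ range n, balancingSign v i • v i
      = ∑ i ∈ floating a (range n), (balancingSign v i - a i) • v i := by
    have hfixed : ∀ i ∈ range n, i ∉ floating a (range n) → (balancingSign v i - a i) • v i = 0 :=
      fun i hi hfl => by
        have : |a i| = 1 := (ha.abs_le_one i).antisymm
          (not_lt.mp fun hlt => hfl (mem_filter.mpr ⟨hi, hlt⟩))
        rw [balancingSign_eq v this, sub_self, zero_smul]
    calc ∑ i ∈ range n, balancingSign v i • v i
        = ∑ i ∈ range n, ((balancingSign v i - a i) • v i + a i • v i) := by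
          simp only [sub_smul, sub_add_cancel]
      _ = _ := by
          rw [sum_add_distrib, ha.sum_eq_zero, add_zero]
          exact (sum_subset (filter_subset _ _) hfixed).symm
  have hterm : ∀ i, ‖(balancingSign v i - a i) • v i‖ ≤ 2 * δ := fun i => by
    rw [norm_smul, Real.norm_eq_abs]
    have : |balancingSign v i - a i| ≤ 2 := (abs_sub _ _).trans <| by
      rcases balancingSign_eq_or v i with h | h <;> simp [h] <;> linarith [ha.abs_le_one i]
    nlinarith [norm_nonneg (v i), hv i]
  have hδ : 0 ≤ δ := (norm_nonneg _).trans (hv 0)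
  calc ‖∑ i ∈ range n, balancingSign v i • v i‖
      ≤ #(floating a (range n)) * (2 * δ) := by
        rw [hsum]
        exact (norm_sum_le _ _).trans (by simpa using sum_le_card_nsmul _ _ _ fun i _ => hterm i)
    _ ≤ finrank ℝ E * (2 * δ) := by gcongr; exact_mod_cast ha.card_floating_le
    _ = 2 * finrank ℝ E * δ := by ring

theorem exists_tendsto_atTop_forall {P : ℕ → ℕ → Prop} (h₀ : ∀ n, P 0 n)
    (h : ∀ j, ∀ᶠ n in atTop, P j n) : ∃ J : ℕ → ℕ, Tendsto J atTop atTop ∧ ∀ n, P (J n) n := by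
  classical
  refine ⟨fun n => Nat.findGreatest (P · n) n, tendsto_atTop.mpr fun j => ?_,
    fun n => Nat.findGreatest_spec (P := (P · n)) (Nat.zero_le n) (h₀ n)⟩
  filter_upwards [h j, eventually_ge_atTop j] with n hn hjn using Nat.le_findGreatest hjn hn

section SignedSeries

variable {E : Type*} [NormedAddCommGroup E] [NormedSpace ℝ E] [FiniteDimensional ℝ E]

/-- Each block `J ⁻¹' {j}` is finite and is signed separately; a partial sum of the series is
the sum over `j` of partial sums of the blocks, which converge and are dominated by
`2 * finrank ℝ E * δ j`. -/
theorem exists_signs_tendsto_of_norm_le_block (c : ℕ → E) {δ : ℕ → ℝ} {D : ℝ}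
    (hδ₀ : ∀ j, 0 ≤ δ j) (hδ : HasSum δ D) {J : ℕ → ℕ} (hJ : Tendsto J atTop atTop)
    (hcJ : ∀ n, ‖c n‖ ≤ δ (J n)) :
    ∃ x : ℕ → ℝ, (∀ n, x n = 1 ∨ x n = -1) ∧ ∃ z : E,
      Tendsto (fun N => ∑ n ∈ range N, x n • c n) atTop (𝓝 z) ∧
        ‖z‖ ≤ 2 * finrank ℝ E * D := by
  have := FiniteDimensional.complete ℝ E
  set w : ℕ → ℕ → E := fun j i => if J i = j then c i else 0
  have hw : ∀ j i, ‖w j i‖ ≤ δ j := fun j i => by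
    by_cases hi : J i = j
    · simpa [w, hi] using hcJ i
    · simpa [w, hi] using hδ₀ j
  choose ε hε hεw using fun j => exists_signs_norm_sum_range_le (w j) (hw j)
  have hblocks : ∀ N, HasSum (fun j => ∑ i ∈ range N, ε j i • w j i)
      (∑ i ∈ range N, ε (J i) i • c i) := fun N =>
    hasSum_sum fun i _ => by
      simpa [w] using hasSum_single (f := fun j => ε j i • w j i) (J i) fun j hj => by
        simp [w, Ne.symm hj]
  have hblock_tendsto : ∀ j, Tendsto (fun N => ∑ i ∈ range N, ε j i • w j i) atTop
      (𝓝 (∑' i, ε j i • w j i)) := fun j => by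
    obtain ⟨N, hN⟩ := eventually_atTop.mp (hJ.eventually_gt_atTop j)
    refine (summable_of_ne_finset_zero (s := range N) fun i hi => ?_).hasSum.tendsto_sum_nat
    simp [w, (hN i (by simpa using hi)).ne']
  have hbound := hδ.mul_left (2 * (finrank ℝ E : ℝ))
  have hlim := tendsto_tsum_of_dominated_convergence hbound.summable hblock_tendsto
    (.of_forall fun N j => hεw j N)
  simp only [fun N => (hblocks N).tsum_eq] at hlim
  exact ⟨fun n => ε (J n) n, fun n => hε _ _, _, hlim, le_of_tendsto hlim.norm
    (.of_forall fun N => (hblocks N).norm_le_of_bounded hbound fun j => hεw j N)⟩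

theorem exists_signs_tendsto_of_tendsto_zero (c : ℕ → E) (hc : Tendsto c atTop (𝓝 0)) {M : ℝ}
    (hM : ∀ n, ‖c n‖ ≤ M) {r : ℝ} (hr₀ : 0 < r) (hr₁ : r < 1) :
    ∃ x : ℕ → ℝ, (∀ n, x n = 1 ∨ x n = -1) ∧ ∃ z : E,
      Tendsto (fun N => ∑ n ∈ range N, x n • c n) atTop (𝓝 z) ∧
        ‖z‖ ≤ 2 * finrank ℝ E * (M * (1 - r)⁻¹) := by
  have hM₀ : 0 ≤ M := (norm_nonneg _).trans (hM 0)
  have hsmall : ∀ j, ∀ᶠ n in atTop, ‖c n‖ ≤ M * r ^ j := fun j => by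
    rcases hM₀.eq_or_lt with rfl | hMpos
    · exact .of_forall fun n => by simpa using hM n
    · exact (hc.norm.eventually_lt_const (by simpa using by positivity)).mono fun n => le_of_lt
  obtain ⟨J, hJ, hcJ⟩ := exists_tendsto_atTop_forall (P := fun j n => ‖c n‖ ≤ M * r ^ j)
    (by simpa using hM) hsmall
  exact exists_signs_tendsto_of_norm_le_block c (fun j => by positivity)
    ((hasSum_geometric_of_lt_one hr₀.le hr₁).mul_left M) hJ hcJ

end SignedSeries

theorem stmt_3 (c : ℕ → ℂ) (hc : Tendsto c atTop (𝓝 0)) :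
    ∃ x : ℕ → ℝ, (∀ n, x n = 1 ∨ x n = -1) ∧
      ∃ z : ℂ,
        Tendsto (fun N => ∑ n ∈ Finset.range N, (x n : ℂ) * c n) atTop (𝓝 z) ∧
        max |z.re| |z.im| ≤ 5 * ⨆ n, max |(c n).re| |(c n).im| := by
  set e := Complex.equivRealProdCLM
  have he : ∀ z, ‖e z‖ = max |z.re| |z.im| := fun z => by simp [e, Prod.norm_def]
  have hec : Tendsto (fun n => e (c n)) atTop (𝓝 0) :=
    (e.continuous.tendsto' 0 0 (map_zero e)).comp hc
  have hM : ∀ n, ‖e (c n)‖ ≤ ⨆ n, max |(c n).re| |(c n).im| := fun n =>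
    he (c n) ▸ le_ciSup (by simpa only [he] using hec.norm.bddAbove_range) n
  obtain ⟨x, hx, z, hz, hzM⟩ := exists_signs_tendsto_of_tendsto_zero _ hec hM
    (r := 1 / 5) (by norm_num) (by norm_num)
  refine ⟨x, hx, e.symm z, ?_, ?_⟩
  · convert (e.symm.continuous.tendsto z).comp hz using 2 with N
    simp [map_sum, Complex.real_smul]
  · rw [← he, e.apply_symm_apply]
    have : finrank ℝ (ℝ × ℝ) = 2 := by simp
    rw [this] at hzM
    linarith
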